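/- arXiv:1111.0871 — 2 statements merged into one kernel-verified Lean document; each statement's English description precedes it below -/
import Mathlib

section
/- Let T be a cocompact G-tree. If an oriented edge e₁ and an oriented edge e₂ in the same G-orbit both lie on a common geodesic ray and are consistently oriented along it, then any g ∈ G with g·e₁ = e₂ and e₁ ≠ e₂ is a hyperbolic automorphism of T. -/
/-- A geodesic ray in a tree: an injective sequence of consecutively adjacent
vertices. -/
def IsGeodRay {V : Type*} (T : SimpleGraph V) (τ : ℕ → V) : Prop :=
  (∀ n, T.Adj (τ n) (τ (n + 1))) ∧ Function.Injective τ

/-!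
If `g` fixed a vertex `x`, it would preserve the distance to `x`. Along a geodesic ray in a tree
this distance first decreases and then increases, and it can never stall; so it cannot take the
same values at the two ends of two different edges of the ray, as it would have to at the ends of
`e₁` and of `e₂ = g • e₁`.
-/

section AscentPropagates

variable {f : ℕ → ℕ} {a b : ℕ} (hup : ∀ n, f n < f (n + 1) → f (n + 1) < f (n + 2))
include hup

theorem apply_lt_apply_succ_of_le (ha : f a < f (a + 1)) (hab : a ≤ b) : f b < f (b + 1) :=
  Nat.le_induction ha (fun n _ ih => hup n ih) b hab

theorem eq_of_apply_eq_of_apply_succ_eq (hstep : ∀ n, f (n + 1) ≠ f n)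
    (h₀ : f a = f b) (h₁ : f (a + 1) = f (b + 1)) : a = b := by
  wlog hab : a < b generalizing a b
  · obtain rfl | hba := (not_lt.mp hab).eq_or_lt
    · rfl
    · exact (this h₀.symm h₁.symm hba).symm
  exfalso
  rcases (hstep a).lt_or_gt with hdesc | hasc
  · have hdesc_b : f (b + 1) < f b := h₀ ▸ h₁ ▸ hdesc
    have hdesc_on : ∀ m, a ≤ m → m < b → f (m + 1) < f m := fun m _ hmb =>
      (hstep m).lt_of_le <| not_lt.mp fun hm =>
        (apply_lt_apply_succ_of_le hup hm hmb.le).not_gt hdesc_b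
    have : StrictAntiOn f (Set.Icc a b) := strictAntiOn_of_succ_lt Set.ordConnected_Icc
      fun m _ hm hm' => hdesc_on m hm.1 (Order.succ_le_iff.mp hm'.2)
    exact (this ⟨le_rfl, hab.le⟩ ⟨hab.le, le_rfl⟩ hab).ne' h₀
  · have : StrictMonoOn f (Set.Icc a b) := strictMonoOn_of_lt_succ Set.ordConnected_Icc
      fun m _ hm _ => apply_lt_apply_succ_of_le hup hasc hm.1
    exact (this ⟨le_rfl, hab.le⟩ ⟨hab.le, le_rfl⟩ hab).ne h₀

end AscentPropagates

namespace SimpleGraph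

variable {V : Type*} {T : SimpleGraph V}

theorem Reachable.dist_map_le {V' : Type*} {T' : SimpleGraph V'} (φ : T →g T') {u v : V}
    (h : T.Reachable u v) : T'.dist (φ u) (φ v) ≤ T.dist u v := by
  obtain ⟨p, hp⟩ := h.exists_walk_length_eq_dist
  exact (dist_le (p.map φ)).trans (by rw [Walk.length_map, hp])

theorem Connected.dist_smul {G : Type*} [Group G] [MulAction G V] (hT : T.Connected)
    (hact : ∀ (g : G) (x y : V), T.Adj x y → T.Adj (g • x) (g • y)) (g : G) (a b : V) :
    T.dist (g • a) (g • b) = T.dist a b := by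
  have hle : ∀ (h : G) (x y : V), T.dist (h • x) (h • y) ≤ T.dist x y := fun h x y =>
    (hT x y).dist_map_le (⟨(h • ·), hact h _ _⟩ : T →g T)
  refine (hle g a b).antisymm ?_
  simpa using hle g⁻¹ (g • a) (g • b)

theorem IsAcyclic.eq_of_adj_of_dist_add_one (hT : T.IsAcyclic) {x y₁ y₂ z : V}
    (h₁ : T.Adj y₁ z) (h₂ : T.Adj y₂ z)
    (hd₁ : T.dist x y₁ + 1 = T.dist x z) (hd₂ : T.dist x y₂ + 1 = T.dist x z) : y₁ = y₂ := by
  have hxz : T.Reachable x z := Reachable.of_dist_ne_zero (by omega)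
  obtain ⟨q, hq, -⟩ := hxz.exists_path_of_dist
  have hpen : ∀ y (h : T.Adj y z), T.dist x y + 1 = T.dist x z → y = q.penultimate := by
    intro y h hd
    obtain ⟨p, -, hp⟩ := (hxz.trans h.symm.reachable).exists_path_of_dist
    have hpath : (p.concat h).IsPath :=
      (p.concat h).isPath_of_length_eq_dist (by rw [Walk.length_concat, hp, hd])
    rw [Subtype.mk.inj <| (hT.subsingleton_path x z).elim ⟨q, hq⟩ ⟨_, hpath⟩,
      Walk.penultimate_concat]
  rw [hpen y₁ h₁ hd₁, hpen y₂ h₂ hd₂]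

end SimpleGraph

open SimpleGraph

section GeodesicRay

variable {V : Type*} {T : SimpleGraph V} {τ : ℕ → V}

theorem IsGeodRay.dist_lt_of_dist_lt (hT : T.IsTree) (hτ : IsGeodRay T τ) (x : V) {n : ℕ}
    (h : T.dist x (τ n) < T.dist x (τ (n + 1))) :
    T.dist x (τ (n + 1)) < T.dist x (τ (n + 2)) := by
  have hadj : T.Adj (τ (n + 1)) (τ (n + 2)) := hτ.1 (n + 1)
  by_contra hge
  have hback : τ n = τ (n + 2) := hT.isAcyclic.eq_of_adj_of_dist_add_one (x := x) (hτ.1 n)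
    hadj.symm
    (by have := hT.dist_eq_dist_add_one_of_adj x (hτ.1 n); omega)
    (by have := hT.dist_eq_dist_add_one_of_adj x hadj; omega)
  exact absurd (hτ.2 hback) (by omega)

theorem IsGeodRay.eq_of_smul_eq {G : Type*} [Group G] [MulAction G V] (hT : T.IsTree)
    (hact : ∀ (g : G) (x y : V), T.Adj x y → T.Adj (g • x) (g • y))
    (hτ : IsGeodRay T τ) {i j : ℕ} {g : G} {x : V} (hx : g • x = x)
    (hg : g • τ i = τ j ∧ g • τ (i + 1) = τ (j + 1)) : i = j := by
  have hdist : ∀ n m, g • τ n = τ m → T.dist x (τ n) = T.dist x (τ m) := fun n m h => by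
    rw [← h, ← hT.connected.dist_smul hact g x, hx]
  exact eq_of_apply_eq_of_apply_succ_eq (f := fun n => T.dist x (τ n))
    (fun _ => hτ.dist_lt_of_dist_lt hT x)
    (fun n => (hT.dist_ne_of_adj x (hτ.1 n)).symm) (hdist _ _ hg.1) (hdist _ _ hg.2)

end GeodesicRay

theorem stmt2_general {V : Type*} (T : SimpleGraph V) (hT : T.IsTree)
    (G : Type*) [Group G] [MulAction G V]
    (hact : ∀ (g : G) (x y : V), T.Adj x y → T.Adj (g • x) (g • y))
    (hnoinv : ∀ (g : G) (x y : V), T.Adj x y → ¬(g • x = y ∧ g • y = x))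
    (τ : ℕ → V) (hτ : IsGeodRay T τ)
    (i j : ℕ) (g : G)
    (hg : g • τ i = τ j ∧ g • τ (i + 1) = τ (j + 1))
    (hne : (τ i, τ (i + 1)) ≠ (τ j, τ (j + 1))) :
    (∀ x : V, g • x ≠ x) ∧ (∀ x y : V, T.Adj x y → ¬(g • x = y ∧ g • y = x)) := by
  refine ⟨fun x hx => hne ?_, hnoinv g⟩
  rw [hτ.eq_of_smul_eq hT hact hx hg]

/-- Let `T` be a cocompact `G`-tree (action by automorphisms,
without inversions).  If the oriented edges `e₁ = (τ i, τ (i+1))` and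
`e₂ = (τ j, τ (j+1))` both lie on a common geodesic ray `τ` (hence are
consistently oriented along it) and `g • e₁ = e₂` with `e₁ ≠ e₂`, then `g` is a
hyperbolic automorphism of `T`: it fixes no vertex and no edge. -/
theorem stmt2 {V : Type*} (T : SimpleGraph V) (hT : T.IsTree)
    (G : Type*) [Group G] [MulAction G V]
    (hact : ∀ (g : G) (x y : V), T.Adj x y → T.Adj (g • x) (g • y))
    (hnoinv : ∀ (g : G) (x y : V), T.Adj x y → ¬(g • x = y ∧ g • y = x))
    (hcocompact : ∃ s : Finset V, ∀ v : V, ∃ g : G, g • v ∈ s)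
    (τ : ℕ → V) (hτ : IsGeodRay T τ)
    (i j : ℕ) (g : G)
    (hg : g • τ i = τ j ∧ g • τ (i + 1) = τ (j + 1))
    (hne : (τ i, τ (i + 1)) ≠ (τ j, τ (j + 1))) :
    (∀ x : V, g • x ≠ x) ∧ (∀ x y : V, T.Adj x y → ¬(g • x = y ∧ g • y = x)) :=
  stmt2_general T hT G hact hnoinv τ hτ i j g hg hne
end

section
/- Let T be a cocompact G-tree, T̃ a minimal G-tree, and q : T̃ → T a G-equivariant tree morphism that is surjective but not locally injective. Then every vertex of T is faced by a collapsing pair: for every vertex v of T there exist distinct adjacent oriented edges ẽ₁, ẽ₂ of T̃ with common initial vertex and q(ẽ₁) = q(ẽ₂) = e, such that the geodesic from the image of their common initial vertex to v passes through e. -/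
/-- A `G`-tree is minimal if it has no proper nonempty `G`-invariant subtree
(nonempty convex invariant vertex set). -/
def IsMinimalGTree {V : Type*} (T : SimpleGraph V) (G : Type*) [Group G]
    [MulAction G V] : Prop :=
  ∀ A : Set V, A.Nonempty →
    (∀ a b c : V, a ∈ A → c ∈ A → T.dist a b + T.dist b c = T.dist a c → b ∈ A) →
    (∀ (g : G) (x : V), x ∈ A → g • x ∈ A) →
    A = Set.univ

/-!
If no collapsing pair faces `q a`, then `q` preserves distances from `a`: along a geodesic
issuing from `a`, the first backtrack of its image would be a collapsing pair facing `q a`.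
So if neither `q a` nor `q c` is faced, `q` maps the geodesic `[a, c]` onto the geodesic
`[q a, q c]`; both ends lie on the near side of every folded edge, hence so does all of
`[q a, q c]`, and no point of `[a, c]` has a faced image. The vertices of `T̃` with unfaced image
thus form a `G`-invariant subtree, which by minimality is empty or everything; it is not
everything, since the far endpoint of a collapsing pair is faced by that pair, and it is
nonempty as soon as some vertex of `T` is unfaced, by surjectivity.
-/

namespace SimpleGraph

variable {V : Type*} {G : SimpleGraph V}

lemma Connected.exists_adj_dist_add_one (hG : G.Connected) {x c : V} (hc : c ≠ x) :
    ∃ b, G.Adj c b ∧ G.dist x b + 1 = G.dist x c := by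
  obtain ⟨p, hp⟩ := hG.exists_walk_length_eq_dist x c
  cases p using Walk.concatRec with
  | Hnil => exact absurd rfl hc
  | Hconcat p hadj =>
    refine ⟨_, hadj.symm, le_antisymm ?_ ?_⟩
    · rw [← hp, Walk.length_concat]
      exact Nat.succ_le_succ (dist_le p)
    · calc G.dist x c ≤ G.dist x _ + G.dist _ c := hG.dist_triangle
        _ = G.dist x _ + 1 := by rw [dist_eq_one_iff_adj.mpr hadj]

lemma Walk.dist_add_dist_of_length_eq_dist {a b y : V} (p : G.Walk a b)
    (hp : p.length = G.dist a b) (hy : y ∈ p.support) :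
    G.dist a y + G.dist y b = G.dist a b := by
  classical
  have hsplit : (p.takeUntil y hy).length + (p.dropUntil y hy).length = p.length := by
    rw [← Walk.length_append, Walk.take_spec]
  have := dist_le (p.takeUntil y hy)
  have := dist_le (p.dropUntil y hy)
  have := (p.takeUntil y hy).reachable.dist_triangle_left b
  omega

lemma IsTree.length_eq_dist_of_isPath (hG : G.IsTree) {a b : V} (p : G.Walk a b)
    (hp : p.IsPath) : p.length = G.dist a b := by
  obtain ⟨p', hp', hl⟩ := hG.connected.exists_path_of_dist a b
  rw [← hl, ← Subtype.mk.inj (hG.isAcyclic.subsingleton_path a b |>.elim ⟨p, hp⟩ ⟨p', hp'⟩)]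

lemma IsTree.eq_of_adj_of_dist_add_one (hG : G.IsTree) {x c b₁ b₂ : V} (h₁ : G.Adj c b₁)
    (h₂ : G.Adj c b₂) (hd₁ : G.dist x b₁ + 1 = G.dist x c)
    (hd₂ : G.dist x b₂ + 1 = G.dist x c) : b₁ = b₂ := by
  obtain ⟨p₁, -, hl₁⟩ := hG.connected.exists_path_of_dist x b₁
  obtain ⟨p₂, -, hl₂⟩ := hG.connected.exists_path_of_dist x b₂
  have hpath : ∀ {b} (p : G.Walk x b) (h : G.Adj b c), p.length = G.dist x b →
      G.dist x b + 1 = G.dist x c → (p.concat h).IsPath := fun p h hl hd =>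
    (p.concat h).isPath_of_length_eq_dist (by rw [Walk.length_concat, hl, hd])
  have := Subtype.mk.inj <| hG.isAcyclic.subsingleton_path x c |>.elim
    ⟨_, hpath p₁ h₁.symm hl₁ hd₁⟩ ⟨_, hpath p₂ h₂.symm hl₂ hd₂⟩
  exact (Walk.concat_inj this).1

/-- `G.dist x r < G.dist x u` says that `x` lies on the `r`-side of the edge `ru`. -/
lemma IsTree.dist_eq_dist_add_one_add_dist (hG : G.IsTree) {r u x y : V} (hru : G.Adj r u)
    (hx : G.dist x r < G.dist x u) (hy : G.dist y u < G.dist y r) :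
    G.dist x y = G.dist x r + 1 + G.dist u y := by
  have hx' := (hG.dist_eq_dist_add_one_of_adj x hru).resolve_left (by omega)
  have hy' := (hG.dist_eq_dist_add_one_of_adj y hru).resolve_right (by omega)
  obtain ⟨P, hP, hPl⟩ := hG.connected.exists_path_of_dist x r
  obtain ⟨Q, hQ, hQl⟩ := hG.connected.exists_path_of_dist u y
  have hdisj : ∀ s ∈ P.support, s ∉ Q.support := by
    intro s hsP hsQ
    have := P.dist_add_dist_of_length_eq_dist hPl hsP
    have := Q.dist_add_dist_of_length_eq_dist hQl hsQ
    have := hG.connected.dist_triangle (u := x) (v := s) (w := u)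
    have := hG.connected.dist_triangle (u := y) (v := s) (w := r)
    grind [SimpleGraph.dist_comm]
  have hpath : (P.append (Walk.cons hru Q)).IsPath := by
    rw [Walk.isPath_def, Walk.support_append, Walk.support_cons, List.tail_cons]
    exact hP.support_nodup.append hQ.support_nodup hdisj
  have := hG.length_eq_dist_of_isPath _ hpath
  rw [Walk.length_append, Walk.length_cons, hPl, hQl] at this
  omega

lemma IsTree.dist_lt_of_dist_add_dist_eq (hG : G.IsTree) {r u x y z : V} (hru : G.Adj r u)
    (hx : G.dist x r < G.dist x u) (hz : G.dist z r < G.dist z u)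
    (hy : G.dist x y + G.dist y z = G.dist x z) : G.dist y r < G.dist y u := by
  by_contra! h
  have h' := lt_of_le_of_ne h (hG.dist_ne_of_adj y hru).symm
  have := hG.dist_eq_dist_add_one_add_dist hru hx h'
  have := hG.dist_eq_dist_add_one_add_dist hru hz h'
  have := hG.connected.dist_triangle (u := x) (v := r) (w := z)
  grind [SimpleGraph.dist_comm]

lemma Connected.dist_smul_s7 {M : Type*} [Group M] [MulAction M V] (hG : G.Connected)
    (hact : ∀ (g : M) (x y : V), G.Adj x y → G.Adj (g • x) (g • y)) (g : M) (x y : V) :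
    G.dist (g • x) (g • y) = G.dist x y := by
  have hle : ∀ (g : M) (x y : V), G.dist (g • x) (g • y) ≤ G.dist x y := fun g x y => by
    obtain ⟨p, hp⟩ := hG.exists_walk_length_eq_dist x y
    rw [← hp, ← Walk.length_map ⟨(g • ·), hact g _ _⟩]
    exact dist_le _
  refine (hle g x y).antisymm ?_
  simpa using hle g⁻¹ (g • x) (g • y)

end SimpleGraph

open SimpleGraph

section CollapsingPair

variable {W V : Type*} {S : SimpleGraph W} {T : SimpleGraph V} {q : W → V}

/-- In a tree, the geodesic from `q p` to `x` passes through the edge `(q p, q w₁)` exactly when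
`q p` is one step farther from `x` than `q w₁`. -/
def IsFacedByCollapsingPair (S : SimpleGraph W) (T : SimpleGraph V) (q : W → V) (x : V) :
    Prop :=
  ∃ p w₁ w₂ : W, S.Adj p w₁ ∧ S.Adj p w₂ ∧ w₁ ≠ w₂ ∧ q w₁ = q w₂ ∧
    T.dist (q p) x = T.dist (q w₁) x + 1

lemma IsFacedByCollapsingPair.smul {G : Type*} [Group G] [MulAction G W] [MulAction G V]
    (hT : T.Connected)
    (hactS : ∀ (g : G) (x y : W), S.Adj x y → S.Adj (g • x) (g • y))
    (hactT : ∀ (g : G) (x y : V), T.Adj x y → T.Adj (g • x) (g • y))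
    (hequiv : ∀ (g : G) (w : W), q (g • w) = g • q w) {x : V}
    (hx : IsFacedByCollapsingPair S T q x) (g : G) : IsFacedByCollapsingPair S T q (g • x) := by
  obtain ⟨p, w₁, w₂, h₁, h₂, hne, hqw, hdist⟩ := hx
  refine ⟨g • p, g • w₁, g • w₂, hactS g _ _ h₁, hactS g _ _ h₂,
    (MulAction.injective g).ne hne, by rw [hequiv, hequiv, hqw], ?_⟩
  rwa [hequiv, hequiv, hT.dist_smul_s7 hactT, hT.dist_smul_s7 hactT]

lemma isFacedByCollapsingPair_of_adj {p w₁ w₂ : W} (hq : ∀ a b : W, S.Adj a b → T.Adj (q a) (q b))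
    (h₁ : S.Adj p w₁) (h₂ : S.Adj p w₂) (hne : w₁ ≠ w₂) (hqw : q w₁ = q w₂) :
    IsFacedByCollapsingPair S T q (q w₁) :=
  ⟨p, w₁, w₂, h₁, h₂, hne, hqw, by simp [hq _ _ h₁]⟩

/-- By induction on `S.dist a w`: if the image of the step `w' → w` went back towards `q a`, it
would fold onto the previous step `w'' → w'`. -/
lemma dist_map_eq_of_not_isFacedByCollapsingPair (hS : S.Connected) (hT : T.IsTree)
    (hq : ∀ a b : W, S.Adj a b → T.Adj (q a) (q b)) {a : W}
    (ha : ¬ IsFacedByCollapsingPair S T q (q a)) (w : W) :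
    T.dist (q a) (q w) = S.dist a w := by
  induction hn : S.dist a w using Nat.strong_induction_on generalizing w with
  | _ n ih =>
  rcases n with _ | n
  · rw [(hS.dist_eq_zero_iff).mp hn, dist_self]
  obtain ⟨w', hww', hw'⟩ := hS.exists_adj_dist_add_one (x := a) (c := w) (by
    rintro rfl; simp at hn)
  have hqw' := ih n (by omega) w' (by omega)
  rcases hT.dist_eq_dist_add_one_of_adj (q a) (hq _ _ hww') with h | h
  · omega
  obtain ⟨w'', hw'w'', hw''⟩ := hS.exists_adj_dist_add_one (x := a) (c := w') (by
    rintro rfl; simp at hw'; omega)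
  have hqw'' := ih (n - 1) (by omega) w'' (by omega)
  have hfold : q w = q w'' := hT.eq_of_adj_of_dist_add_one (x := q a) (hq _ _ hww'.symm)
    (hq _ _ hw'w'') (by omega) (by omega)
  refine absurd ⟨w', w, w'', hww'.symm, hw'w'', fun h => by subst h; omega, hfold, ?_⟩ ha
  rw [dist_comm, dist_comm (u := q w)]
  omega

lemma not_isFacedByCollapsingPair_of_dist_add_dist_eq (hS : S.Connected) (hT : T.IsTree)
    (hq : ∀ a b : W, S.Adj a b → T.Adj (q a) (q b)) {a b c : W}
    (ha : ¬ IsFacedByCollapsingPair S T q (q a)) (hc : ¬ IsFacedByCollapsingPair S T q (q c))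
    (hb : S.dist a b + S.dist b c = S.dist a c) :
    ¬ IsFacedByCollapsingPair S T q (q b) := by
  rintro ⟨p, w₁, w₂, h₁, h₂, hne, hqw, hdist⟩
  have hadj := hq _ _ h₁
  have side : ∀ {x}, ¬ IsFacedByCollapsingPair S T q x → T.dist x (q p) < T.dist x (q w₁) := by
    intro x hx
    rcases hT.dist_eq_dist_add_one_of_adj x hadj with h | h
    · exact absurd ⟨p, w₁, w₂, h₁, h₂, hne, hqw, by rw [dist_comm, h, dist_comm]⟩ hx
    · omega
  have hqb : T.dist (q a) (q b) + T.dist (q b) (q c) = T.dist (q a) (q c) := by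
    rw [dist_map_eq_of_not_isFacedByCollapsingPair hS hT hq ha,
      dist_map_eq_of_not_isFacedByCollapsingPair hS hT hq ha, SimpleGraph.dist_comm (u := q b),
      dist_map_eq_of_not_isFacedByCollapsingPair hS hT hq hc, SimpleGraph.dist_comm (u := c), hb]
  have := hT.dist_lt_of_dist_add_dist_eq hadj (side ha) (side hc) hqb
  rw [SimpleGraph.dist_comm (u := q b), SimpleGraph.dist_comm (u := q b)] at this
  omega

end CollapsingPair

theorem stmt7_general {W V : Type*} (S : SimpleGraph W) (T : SimpleGraph V)
    (hS : S.IsTree) (hT : T.IsTree)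
    (G : Type*) [Group G] [MulAction G W] [MulAction G V]
    (hactS : ∀ (g : G) (x y : W), S.Adj x y → S.Adj (g • x) (g • y))
    (hactT : ∀ (g : G) (x y : V), T.Adj x y → T.Adj (g • x) (g • y))
    (hmin : IsMinimalGTree S G)
    (q : W → V) (hq : ∀ a b : W, S.Adj a b → T.Adj (q a) (q b))
    (hequiv : ∀ (g : G) (w : W), q (g • w) = g • q w)
    (hsurj : Function.Surjective q)
    (hnotlocinj : ¬ ∀ (w a b : W), S.Adj w a → S.Adj w b → q a = q b → a = b) :
    ∀ v : V, ∃ p w₁ w₂ : W, S.Adj p w₁ ∧ S.Adj p w₂ ∧ w₁ ≠ w₂ ∧ q w₁ = q w₂ ∧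
      T.dist (q p) v = T.dist (q w₁) v + 1 := by
  intro v
  by_contra hv
  obtain ⟨w₀, rfl⟩ := hsurj v
  have hunfaced : {w | ¬ IsFacedByCollapsingPair S T q (q w)} = Set.univ :=
    hmin _ ⟨w₀, hv⟩
      (fun _ _ _ ha hc hb =>
        not_isFacedByCollapsingPair_of_dist_add_dist_eq hS.connected hT hq ha hc hb)
      (fun g _ hw hgw =>
        hw <| by simpa [hequiv] using hgw.smul hT.connected hactS hactT hequiv g⁻¹)
  obtain ⟨p, w₁, w₂, h₁, h₂, hqw, hne⟩ : ∃ p w₁ w₂ : W, S.Adj p w₁ ∧ S.Adj p w₂ ∧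
      q w₁ = q w₂ ∧ w₁ ≠ w₂ := by
    simpa using hnotlocinj
  have hw₁ : w₁ ∈ {w | ¬ IsFacedByCollapsingPair S T q (q w)} := hunfaced ▸ Set.mem_univ w₁
  exact hw₁ (isFacedByCollapsingPair_of_adj hq h₁ h₂ hne hqw)

/-- Let `T` be a cocompact `G`-tree, `T̃` a minimal `G`-tree, and
`q : T̃ → T` a `G`-equivariant tree morphism which is surjective but not locally
injective.  Then every vertex `v` of `T` is faced by a collapsing pair: there
are distinct edges `(p, w₁)`, `(p, w₂)` of `T̃` with `q w₁ = q w₂` such that the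
geodesic from `q p` to `v` passes through the edge `(q p, q w₁)`. -/
theorem stmt7 {W V : Type*} (S : SimpleGraph W) (T : SimpleGraph V)
    (hS : S.IsTree) (hT : T.IsTree)
    (G : Type*) [Group G] [MulAction G W] [MulAction G V]
    (hactS : ∀ (g : G) (x y : W), S.Adj x y → S.Adj (g • x) (g • y))
    (hactT : ∀ (g : G) (x y : V), T.Adj x y → T.Adj (g • x) (g • y))
    (hcocompact : ∃ s : Finset V, ∀ v : V, ∃ g : G, g • v ∈ s)
    (hmin : IsMinimalGTree S G)
    (q : W → V) (hq : ∀ a b : W, S.Adj a b → T.Adj (q a) (q b))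
    (hequiv : ∀ (g : G) (w : W), q (g • w) = g • q w)
    (hsurj : Function.Surjective q)
    (hnotlocinj : ¬ ∀ (w a b : W), S.Adj w a → S.Adj w b → q a = q b → a = b) :
    ∀ v : V, ∃ p w₁ w₂ : W, S.Adj p w₁ ∧ S.Adj p w₂ ∧ w₁ ≠ w₂ ∧ q w₁ = q w₂ ∧
      T.dist (q p) v = T.dist (q w₁) v + 1 :=
  stmt7_general S T hS hT G hactS hactT hmin q hq hequiv hsurj hnotlocinj
end
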